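/- Main theorem (expected vertex count of a random hypercube slice): Let W be a k-dimensional subspace of ℝ^n, N = W^⊥, and P_N orthogonal projection onto N. Suppose P_N(C) has positive (n−k)-dimensional volume, where C = [-1,1]^n. For each (n−k)-dimensional face F of C, the probability that a flat τ + W intersects F, when τ is chosen uniformly from P_N(C) (with respect to (n−k)-dimensional Lebesgue measure on N), is vol_{n−k}(P_N(F))/vol_{n−k}(P_N(C)). Then the sum of these probabilities over all (n−k)-dimensional faces F equals 2^k; i.e., Σ_F vol_{n−k}(P_N(F)) = 2^k · vol_{n−k}(P_N(C)). -/

import Mathlib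

/-!
Write `Z(S)` for the zonotope `∑_{i ∈ S} [-v_i, v_i]` spanned by vectors `v_i` of a `d`-dimensional
space. For every Haar measure `μ`, `μ Z(s) = ∑_{|S| = d} μ Z(S)`: by induction on `s`, adding a
segment `[-u, u]` to a compact convex body `A` adds, by Cavalieri's principle in coordinates in
which `u` is the first basis vector, a multiple of the measure of the projection of `A` along `u`;
that projection of `Z(S)` is the zonotope of the projected vectors, to which the induction
hypothesis applies one dimension lower, while the zonotopes of fewer than `d` vectors are null.

Projecting `C = [-1,1]^n` orthogonally onto `N = W^⊥` gives the zonotope of the projections `w_i`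
of the standard basis vectors, and projecting the face `F_{J,ε}` gives a translate of the zonotope
`Z(Jᶜ)` of the `w_i` with `i ∉ J`. Summing over the `2^k` signs `ε` and over `J ↦ Jᶜ` turns the
face sum into `2^k ∑_{|S| = n - k} vol Z(S) = 2^k vol P_N(C)`.
-/

open MeasureTheory Finset

/-- The face of the cube `[-1,1]^n ⊆ ℝ^n` obtained by fixing, for each `j ∈ J`, the
`j`-th coordinate to `+1` or `-1` according to the sign `ε j`. -/
def cubeFace {n : ℕ} (J : Finset (Fin n)) (ε : J → Bool) :
    Set (EuclideanSpace ℝ (Fin n)) :=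
  {x | (∀ i, x i ∈ Set.Icc (-1 : ℝ) 1) ∧
    ∀ j (hj : j ∈ J), x j = if ε ⟨j, hj⟩ then 1 else -1}

open Module Measure
open scoped Pointwise ENNReal

section Zonotope

variable {ι E F : Type*} [AddCommGroup E] [Module ℝ E] [AddCommGroup F] [Module ℝ F]

def zonotope (s : Finset ι) (v : ι → E) : Set E :=
  ∑ i ∈ s, segment ℝ (-v i) (v i)

lemma image_segment_neg {𝓕 : Type*} [FunLike 𝓕 E F] [LinearMapClass 𝓕 ℝ E F] (L : 𝓕) (u : E) :
    L '' segment ℝ (-u) u = segment ℝ (-L u) (L u) := by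
  simpa using image_segment ℝ (L : E →ₗ[ℝ] F).toAffineMap (-u) u

lemma segment_neg_eq_image (u : E) :
    segment ℝ (-u) u = (fun t : ℝ => t • u) '' Set.Icc (-1) 1 := by
  rw [← segment_eq_Icc (by norm_num : (-1 : ℝ) ≤ 1)]
  simpa using (image_segment_neg (LinearMap.toSpanSingleton ℝ E u) (1 : ℝ)).symm

lemma zonotope_insert [DecidableEq ι] {a : ι} {s : Finset ι} (ha : a ∉ s) (v : ι → E) :
    zonotope (insert a s) v = zonotope s v + segment ℝ (-v a) (v a) := by
  rw [zonotope, sum_insert ha, add_comm, zonotope]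

lemma mem_zonotope {s : Finset ι} {v : ι → E} {x : E} :
    x ∈ zonotope s v ↔
      ∃ c : ι → ℝ, (∀ i ∈ s, c i ∈ Set.Icc (-1 : ℝ) 1) ∧ ∑ i ∈ s, c i • v i = x := by
  simp only [zonotope, Set.mem_finsetSum, segment_neg_eq_image]
  constructor
  · rintro ⟨g, hg, rfl⟩
    choose! c hc hcg using fun i (hi : i ∈ s) => hg hi
    exact ⟨c, hc, sum_congr rfl hcg⟩
  · rintro ⟨c, hc, rfl⟩
    exact ⟨fun i => c i • v i, fun hi => Set.mem_image_of_mem _ (hc _ hi), rfl⟩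

lemma zero_mem_zonotope (s : Finset ι) (v : ι → E) : (0 : E) ∈ zonotope s v :=
  mem_zonotope.2 ⟨0, fun _ _ => by norm_num, by simp⟩

lemma image_zonotope {𝓕 : Type*} [FunLike 𝓕 E F] [LinearMapClass 𝓕 ℝ E F] (L : 𝓕)
    (s : Finset ι) (v : ι → E) : L '' zonotope s v = zonotope s (fun i => L (v i)) := by
  simp only [zonotope, Set.image_finsetSum, image_segment_neg]

lemma convex_zonotope (s : Finset ι) (v : ι → E) : Convex ℝ (zonotope s v) :=
  sum_induction _ (Convex ℝ) (fun _ _ => Convex.add) (convex_singleton (0 : E))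
    fun _ _ => convex_segment _ _

lemma zonotope_subset_span (s : Finset ι) (v : ι → E) :
    zonotope s v ⊆ Submodule.span ℝ (v '' s) := by
  intro x hx
  obtain ⟨c, -, rfl⟩ := mem_zonotope.1 hx
  exact Submodule.sum_mem _ fun i hi => Submodule.smul_mem _ _ (Submodule.subset_span ⟨i, hi, rfl⟩)

variable [TopologicalSpace E] [ContinuousSMul ℝ E]

lemma isCompact_segment_neg (u : E) : IsCompact (segment ℝ (-u) u) := by
  rw [segment_neg_eq_image]
  exact isCompact_Icc.image (continuous_id.smul continuous_const)

lemma isCompact_zonotope [ContinuousAdd E] (s : Finset ι) (v : ι → E) : IsCompact (zonotope s v) :=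
  sum_induction _ IsCompact (fun _ _ => IsCompact.add) isCompact_singleton
    fun _ _ => isCompact_segment_neg _

end Zonotope

lemma volume_add_Icc {K : Set ℝ} (hK : IsCompact K) (hc : Convex ℝ K) (hne : K.Nonempty)
    {a b : ℝ} (hab : a ≤ b) : volume (K + Set.Icc a b) = volume K + ENNReal.ofReal (b - a) := by
  have hK' : K = Set.Icc (sInf K) (sSup K) :=
    eq_Icc_of_connected_compact ⟨hne, hc.isPreconnected⟩ hK
  have hle : sInf K ≤ sSup K := csInf_le_csSup hne hK.bddBelow hK.bddAbove
  rw [hK', Set.Icc_add_Icc hle hab, Real.volume_Icc, Real.volume_Icc,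
    ← ENNReal.ofReal_add (by linarith) (by linarith)]
  congr 1
  ring

lemma prodMk_preimage_add_segment {F : Type*} [AddCommGroup F] [Module ℝ F] (A : Set (ℝ × F))
    (y : F) :
    (fun t => (t, y)) ⁻¹' (A + segment ℝ (-(1, 0)) (1, 0)) =
      (fun t => (t, y)) ⁻¹' A + Set.Icc (-1) 1 := by
  ext t
  simp only [segment_neg_eq_image, Set.mem_preimage, Set.mem_add, Set.mem_image]
  constructor
  · rintro ⟨⟨s, z⟩, ha, _, ⟨r, hr, rfl⟩, hsum⟩
    obtain ⟨rfl, rfl⟩ : s + r = t ∧ z + 0 = y := by simpa [Prod.ext_iff] using hsum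
    exact ⟨s, by simpa using ha, r, hr, rfl⟩
  · rintro ⟨s, ha, r, hr, rfl⟩
    exact ⟨(s, y), ha, _, ⟨r, hr, rfl⟩, by simp⟩

lemma volume_prod_add_segment {F : Type*} [NormedAddCommGroup F] [NormedSpace ℝ F]
    [MeasurableSpace F] [BorelSpace F] (ν : Measure F) [SFinite ν] {A : Set (ℝ × F)}
    (hA : Convex ℝ A) (hK : IsCompact A) :
    (volume.prod ν) (A + segment ℝ (-(1, 0)) (1, 0)) =
      volume.prod ν A + 2 * ν (Prod.snd '' A) := by
  have hslice : ∀ y, volume ((fun t => (t, y)) ⁻¹' (A + segment ℝ (-(1, 0)) (1, 0))) =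
      volume ((fun t => (t, y)) ⁻¹' A) + (Prod.snd '' A).indicator (fun _ => 2) y := by
    intro y
    rw [prodMk_preimage_add_segment]
    by_cases hy : y ∈ Prod.snd '' A
    · have hne : ((fun t => (t, y)) ⁻¹' A).Nonempty := by
        obtain ⟨⟨t, _⟩, ht, rfl⟩ := hy
        exact ⟨t, ht⟩
      have hcompact : IsCompact ((fun t => (t, y)) ⁻¹' A) :=
        Metric.isCompact_of_isClosed_isBounded (hK.isClosed.preimage (by fun_prop))
          ((hK.image continuous_fst).isBounded.subset fun t ht => ⟨_, ht, rfl⟩)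
      have hconvex : Convex ℝ ((fun t => (t, y)) ⁻¹' A) := by
        have hpreimage :
            (fun t => (t, y)) ⁻¹' A = LinearMap.inl ℝ ℝ F ⁻¹' ((0, y) + ·) ⁻¹' A := by
          ext t
          simp
        exact hpreimage ▸ (hA.translate_preimage_right (0, y)).linear_preimage _
      rw [volume_add_Icc hcompact hconvex hne (by norm_num), Set.indicator_of_mem hy]
      norm_num
    · have hempty : (fun t => (t, y)) ⁻¹' A = ∅ :=
        Set.eq_empty_of_forall_notMem fun t ht => hy ⟨_, ht, rfl⟩
      simp [hempty, Set.indicator_of_notMem hy]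
  rw [prod_apply_symm (hK.add (isCompact_segment_neg _)).measurableSet,
    prod_apply_symm hK.measurableSet, lintegral_congr hslice,
    lintegral_add_left (measurable_measure_prodMk_right hK.measurableSet),
    lintegral_indicator_const (hK.image continuous_snd).measurableSet]

section AddHaar

variable {E : Type*} [NormedAddCommGroup E] [NormedSpace ℝ E] [MeasurableSpace E] [BorelSpace E]

lemma exists_addHaar_eq_mul_addHaar_image {G : Type*} [NormedAddCommGroup G] [NormedSpace ℝ G]
    [FiniteDimensional ℝ G] [MeasurableSpace G] [BorelSpace G] (μ : Measure E) [IsAddHaarMeasure μ]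
    (ν : Measure G) [IsAddHaarMeasure ν] (T : E ≃L[ℝ] G) :
    ∃ c : ℝ≥0∞, ∀ X, μ X = c * ν (T '' X) := by
  refine ⟨(μ.map T).addHaarScalarFactor ν, fun X => ?_⟩
  calc μ X = μ.map T (T '' X) := by
        rw [show (⇑T : E → G) = T.toHomeomorph.toMeasurableEquiv from rfl,
          MeasurableEquiv.map_apply, MeasurableEquiv.preimage_image]
    _ = _ := by
        conv_lhs => rw [isAddLeftInvariant_eq_smul (μ.map T) ν]
        rfl

variable [FiniteDimensional ℝ E]

lemma addHaar_zonotope_eq_zero (μ : Measure E) [IsAddHaarMeasure μ] {ι : Type*} {s : Finset ι}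
    (hs : s.card < finrank ℝ E) (v : ι → E) : μ (zonotope s v) = 0 := by
  refine measure_mono_null (zonotope_subset_span s v) (addHaar_submodule μ _ fun htop => ?_)
  classical
  have hspan : finrank ℝ (Submodule.span ℝ (v '' s)) ≤ s.card := by
    rw [← coe_image]
    exact (finrank_span_finset_le_card _).trans card_image_le
  rw [htop, finrank_top] at hspan
  omega

/-- `R` is the projection along `u` in coordinates `E ≃ ℝ × ℝ^m` sending `u` to `(1, 0)`, where
the identity is Cavalieri's principle. -/
lemma exists_addHaar_add_segment (μ : Measure E) [IsAddHaarMeasure μ] {m : ℕ}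
    (hE : finrank ℝ E = m + 1) (u : E) :
    ∃ (κ : ℝ≥0∞) (R : E →ₗ[ℝ] (Fin m → ℝ)), ∀ A : Set E, Convex ℝ A → IsCompact A →
      μ (A + segment ℝ (-u) u) = μ A + κ * volume (R '' A) := by
  rcases eq_or_ne u 0 with rfl | hu
  · exact ⟨0, 0, fun A _ _ => by simp⟩
  let T₀ : E ≃L[ℝ] ℝ × (Fin m → ℝ) := .ofFinrankEq (by simp [hE, add_comm])
  obtain ⟨T₁, hT₁⟩ := SeparatingDual.exists_continuousLinearEquiv_apply_eq (R := ℝ)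
    (T₀.map_ne_zero_iff.2 hu) (by simp : ((1 : ℝ), (0 : Fin m → ℝ)) ≠ 0)
  let T := T₀.trans T₁
  obtain ⟨c, hc⟩ := exists_addHaar_eq_mul_addHaar_image μ (volume.prod volume) T
  refine ⟨2 * c, (LinearMap.snd ℝ ℝ _).comp (T : E →ₗ[ℝ] ℝ × (Fin m → ℝ)), fun A hA hK => ?_⟩
  have hTu : T u = (1, 0) := hT₁
  have hTA : T '' (A + segment ℝ (-u) u) = T '' A + segment ℝ (-(1, 0)) (1, 0) := by
    rw [Set.image_add, image_segment_neg, hTu]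
  have hTA_convex : Convex ℝ (T '' A) := hA.linear_image (T : E →ₗ[ℝ] ℝ × (Fin m → ℝ))
  rw [hc, hc A, hTA, volume_prod_add_segment volume hTA_convex (hK.image T.continuous),
    Set.image_image, mul_add, mul_left_comm, mul_assoc]
  rfl

end AddHaar

lemma sum_powersetCard_succ_insert {α M : Type*} [DecidableEq α] [AddCommMonoid M] {a : α}
    {s : Finset α} (ha : a ∉ s) (m : ℕ) (f : Finset α → M) :
    ∑ S ∈ (insert a s).powersetCard (m + 1), f S =
      ∑ S ∈ s.powersetCard (m + 1), f S + ∑ S ∈ s.powersetCard m, f (insert a S) := by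
  rw [powersetCard_succ_insert ha, sum_union, sum_image]
  · intro S hS S' hS' h
    have haS : a ∉ S := fun h => ha ((mem_powersetCard.1 (mem_coe.1 hS)).1 h)
    have haS' : a ∉ S' := fun h => ha ((mem_powersetCard.1 (mem_coe.1 hS')).1 h)
    rw [← erase_insert haS, h, erase_insert haS']
  · rw [Finset.disjoint_left]
    rintro _ hS hS'
    obtain ⟨S, -, rfl⟩ := mem_image.1 hS'
    exact ha ((mem_powersetCard.1 hS).1 (mem_insert_self a S))

lemma volume_zonotope_eq_sum {ι : Type*} [DecidableEq ι] (s : Finset ι) {d : ℕ}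
    (v : ι → Fin d → ℝ) :
    volume (zonotope s v) = ∑ S ∈ s.powersetCard d, volume (zonotope S v) := by
  induction s using Finset.induction_on generalizing d with
  | empty =>
    cases d with
    | zero => simp
    | succ m =>
      rw [powersetCard_eq_empty.2 (by simp), sum_empty]
      exact addHaar_zonotope_eq_zero volume (by simp) v
  | insert a s ha ih =>
    cases d with
    | zero =>
      rw [powersetCard_zero, sum_singleton, (Set.nonempty_of_mem (zero_mem_zonotope _ v)).eq_univ,
        (Set.nonempty_of_mem (zero_mem_zonotope ∅ v)).eq_univ]
    | succ m =>
      obtain ⟨κ, R, hR⟩ := exists_addHaar_add_segment volume (m := m) (by simp) (v a)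
      have hinsert : ∀ S, a ∉ S → volume (zonotope (insert a S) v) =
          volume (zonotope S v) + κ * volume (zonotope S (fun i => R (v i))) := fun S haS => by
        rw [zonotope_insert haS, hR _ (convex_zonotope S v) (isCompact_zonotope S v),
          image_zonotope]
      have hcylinder : ∀ S ∈ s.powersetCard m, volume (zonotope (insert a S) v) =
          κ * volume (zonotope S (fun i => R (v i))) := fun S hS => by
        rw [mem_powersetCard] at hS
        have hflat : volume (zonotope S v) = 0 :=
          addHaar_zonotope_eq_zero volume (by simp [hS.2]) v
        rw [hinsert S fun h => ha (hS.1 h), hflat, zero_add]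
      rw [hinsert s ha, ih, ih (fun i => R (v i)), sum_powersetCard_succ_insert ha, mul_sum,
        sum_congr rfl hcylinder]

lemma addHaar_zonotope_eq_sum {E : Type*} [NormedAddCommGroup E] [NormedSpace ℝ E]
    [FiniteDimensional ℝ E] [MeasurableSpace E] [BorelSpace E] (μ : Measure E) [IsAddHaarMeasure μ]
    {ι : Type*} [DecidableEq ι] (s : Finset ι) (v : ι → E) :
    μ (zonotope s v) = ∑ S ∈ s.powersetCard (finrank ℝ E), μ (zonotope S v) := by
  let T : E ≃L[ℝ] (Fin (finrank ℝ E) → ℝ) := .ofFinrankEq (by simp)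
  obtain ⟨c, hc⟩ := exists_addHaar_eq_mul_addHaar_image μ volume T
  simp only [hc, image_zonotope, ← mul_sum]
  rw [volume_zonotope_eq_sum]

section Cube

variable {ι : Type*} [DecidableEq ι]

lemma sum_smul_single_apply (s : Finset ι) (c : ι → ℝ) (l : ι) :
    (∑ i ∈ s, c i • EuclideanSpace.single i (1 : ℝ)) l = if l ∈ s then c l else 0 := by
  simp [Pi.single_apply]

lemma mem_zonotope_single {s : Finset ι} {x : EuclideanSpace ℝ ι} :
    x ∈ zonotope s (fun i => EuclideanSpace.single i (1 : ℝ)) ↔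
      (∀ i ∈ s, x i ∈ Set.Icc (-1 : ℝ) 1) ∧ ∀ i ∉ s, x i = 0 := by
  rw [mem_zonotope]
  constructor
  · rintro ⟨c, hc, rfl⟩
    exact ⟨fun i hi => by simpa [sum_smul_single_apply, hi] using hc i hi,
      fun i hi => by simp [sum_smul_single_apply, hi]⟩
  · rintro ⟨hin, hout⟩
    refine ⟨x, hin, PiLp.ext fun l => ?_⟩
    rw [sum_smul_single_apply]
    split_ifs with hl
    · rfl
    · exact (hout l hl).symm

lemma cube_eq_zonotope [Fintype ι] :
    {x : EuclideanSpace ℝ ι | ∀ i, x i ∈ Set.Icc (-1 : ℝ) 1} =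
      zonotope univ (fun i => EuclideanSpace.single i (1 : ℝ)) := by
  ext x
  simp [mem_zonotope_single]

end Cube

def cubeFaceCenter {n : ℕ} (J : Finset (Fin n)) (ε : J → Bool) : EuclideanSpace ℝ (Fin n) :=
  WithLp.toLp 2 fun j => if hj : j ∈ J then (if ε ⟨j, hj⟩ then 1 else -1) else 0

lemma cubeFaceCenter_apply_of_mem {n : ℕ} {J : Finset (Fin n)} (ε : J → Bool) {j : Fin n}
    (hj : j ∈ J) : cubeFaceCenter J ε j = if ε ⟨j, hj⟩ then 1 else -1 := dif_pos hj

lemma cubeFaceCenter_apply_of_notMem {n : ℕ} {J : Finset (Fin n)} (ε : J → Bool) {j : Fin n}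
    (hj : j ∉ J) : cubeFaceCenter J ε j = 0 := dif_neg hj

lemma cubeFace_eq {n : ℕ} (J : Finset (Fin n)) (ε : J → Bool) :
    cubeFace J ε =
      {cubeFaceCenter J ε} + zonotope Jᶜ (fun i => EuclideanSpace.single i (1 : ℝ)) := by
  ext x
  rw [Set.singleton_add, Set.image_add_left, Set.mem_preimage, mem_zonotope_single]
  simp only [cubeFace, Set.mem_ofPred_eq, mem_compl, not_not, PiLp.add_apply, PiLp.neg_apply]
  constructor
  · rintro ⟨hcube, hfix⟩
    refine ⟨fun i hi => ?_, fun j hj => ?_⟩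
    · simpa [cubeFaceCenter_apply_of_notMem ε hi] using hcube i
    · rw [hfix j hj, cubeFaceCenter_apply_of_mem ε hj, neg_add_cancel]
  · rintro ⟨hfree, hfix⟩
    have hfix' : ∀ j (hj : j ∈ J), x j = if ε ⟨j, hj⟩ then 1 else -1 := fun j hj => by
      rw [← cubeFaceCenter_apply_of_mem ε hj]
      linarith [hfix j hj]
    refine ⟨fun i => ?_, hfix'⟩
    by_cases hi : i ∈ J
    · rw [hfix' i hi]
      split_ifs <;> norm_num
    · simpa [cubeFaceCenter_apply_of_notMem ε hi] using hfree i hi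

lemma sum_powersetCard_compl {α M : Type*} [Fintype α] [DecidableEq α] [AddCommMonoid M] {k : ℕ}
    (hk : k ≤ Fintype.card α) (f : Finset α → M) :
    ∑ J ∈ univ.powersetCard k, f Jᶜ = ∑ S ∈ univ.powersetCard (Fintype.card α - k), f S := by
  refine sum_nbij' (fun J => Jᶜ) (fun S => Sᶜ) (fun J hJ => ?_) (fun S hS => ?_)
    (fun J _ => compl_compl J) (fun S _ => compl_compl S) (fun _ _ => rfl)
  · simp_all [card_compl]
  · simp_all [card_compl]
    omega

theorem expected_vertices_of_hypercube_slice_general {n k : ℕ}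
    (W : Submodule ℝ (EuclideanSpace ℝ (Fin n)))
    (hW : Module.finrank ℝ W = k)
    (P : EuclideanSpace ℝ (Fin n) → EuclideanSpace ℝ (Fin n))
    (hP : P = fun x => (Submodule.orthogonalProjectionOnto Wᗮ x : EuclideanSpace ℝ (Fin n))) :
    ∑ J ∈ Finset.univ.powersetCard k, ∑ ε : J → Bool,
        μH[(n - k : ℕ)] (P '' cubeFace J ε) =
      2 ^ k * μH[(n - k : ℕ)]
        (P '' {x : EuclideanSpace ℝ (Fin n) | ∀ i, x i ∈ Set.Icc (-1 : ℝ) 1}) := by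
  classical
  have hN : finrank ℝ Wᗮ = n - k := by
    have := W.finrank_add_finrank_orthogonal
    rw [hW, finrank_euclideanSpace_fin] at this
    omega
  have : IsAddHaarMeasure (μH[(n - k : ℕ)] : Measure Wᗮ) := hN ▸ inferInstance
  set π := Wᗮ.orthogonalProjectionOnto
  set w : Fin n → Wᗮ := fun i => π (EuclideanSpace.single i 1)
  have hμ : ∀ X, μH[(n - k : ℕ)] (P '' X) = μH[(n - k : ℕ)] (π '' X) := fun X => by
    rw [hP, ← Wᗮ.subtypeₗᵢ.isometry.hausdorffMeasure_image (Or.inl (by positivity)),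
      Set.image_image]
    rfl
  have hface : ∀ J ε, μH[(n - k : ℕ)] (P '' cubeFace J ε) = μH[(n - k : ℕ)] (zonotope Jᶜ w) :=
    fun J ε => by
      rw [hμ, cubeFace_eq, Set.image_add, Set.image_singleton, image_zonotope, Set.singleton_add,
        Set.image_add_left, measure_preimage_add]
  have hcompl := sum_powersetCard_compl (by simpa [hW] using W.finrank_le)
    fun S => μH[(n - k : ℕ)] (zonotope S w)
  rw [Fintype.card_fin] at hcompl
  rw [hμ, cube_eq_zonotope, image_zonotope, addHaar_zonotope_eq_sum, hN, ← hcompl, mul_sum]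
  refine sum_congr rfl fun J hJ => ?_
  simp [hface, (mem_powersetCard_univ.1 hJ)]

theorem expected_vertices_of_hypercube_slice {n k : ℕ} (hk : k ≤ n)
    (W : Submodule ℝ (EuclideanSpace ℝ (Fin n)))
    (hW : Module.finrank ℝ W = k)
    (P : EuclideanSpace ℝ (Fin n) → EuclideanSpace ℝ (Fin n))
    (hP : P = fun x => (Submodule.orthogonalProjectionOnto Wᗮ x : EuclideanSpace ℝ (Fin n)))
    (hpos : 0 < μH[(n - k : ℕ)]
      (P '' {x : EuclideanSpace ℝ (Fin n) | ∀ i, x i ∈ Set.Icc (-1 : ℝ) 1})) :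
    ∑ J ∈ Finset.univ.powersetCard k, ∑ ε : J → Bool,
        μH[(n - k : ℕ)] (P '' cubeFace J ε) =
      2 ^ k * μH[(n - k : ℕ)]
        (P '' {x : EuclideanSpace ℝ (Fin n) | ∀ i, x i ∈ Set.Icc (-1 : ℝ) 1}) :=
  expected_vertices_of_hypercube_slice_general W hW P hP
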